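/- arXiv:2503.01920 — 5 statements merged into one kernel-verified Lean document; each statement's English description precedes it below -/
import Mathlib

section
/- For every partition λ of d ≥ 1, κ_λ ≤ d(d−1), with equality if and only if λ = (d) is the one-row partition. -/
/-
Writing `κ_λ = Σ λ_i² − Σ (2i − 1) λ_i`, the bound `λ_i ≤ d` gives `Σ λ_i² ≤ d²`, while
`Σ (2i − 1) λ_i = d + 2 Σ (i − 1) λ_i ≥ d`. Hence `κ_λ ≤ d(d − 1)`, and the slack
`2 Σ (i − 1) λ_i` vanishes only when there is a single row.
-/

/-- `κ_λ = Σ_i λ_i (λ_i - 2 i + 1)` for a partition given as a list (1-indexed rows). -/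
def kappa (l : List ℤ) : ℤ :=
  ∑ i : Fin l.length, l.get i * (l.get i - 2 * ((i.val : ℤ) + 1) + 1)

/-- A list of integers represents a partition if it is weakly decreasing and all parts
are positive. -/
def IsPartition (l : List ℤ) : Prop :=
  l.Pairwise (· ≥ ·) ∧ ∀ x ∈ l, 0 < x

theorem kappa_singleton (a : ℤ) : kappa [a] = a * (a - 1) := by
  simp only [kappa, List.length_singleton, Fin.sum_univ_one, List.get_eq_getElem,
    Fin.val_zero, List.getElem_singleton]
  ring

theorem kappa_add_two_mul_sum_le {l : List ℤ} (hl : ∀ x ∈ l, 0 ≤ x) :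
    kappa l + 2 * ∑ i : Fin l.length, (i.val : ℤ) * l.get i ≤ l.sum * (l.sum - 1) := by
  have hsum : ∑ i : Fin l.length, l.get i = l.sum := by simp
  have hterm (i : Fin l.length) : l.get i * (l.get i - 2 * ((i.val : ℤ) + 1) + 1)
      + 2 * ((i.val : ℤ) * l.get i) ≤ l.sum * l.get i - l.get i := by
    have hnonneg := hl _ (l.get_mem i)
    have hle := List.single_le_sum hl _ (l.get_mem i)
    nlinarith
  calc kappa l + 2 * ∑ i : Fin l.length, (i.val : ℤ) * l.get i
      = ∑ i : Fin l.length, (l.get i * (l.get i - 2 * ((i.val : ℤ) + 1) + 1)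
          + 2 * ((i.val : ℤ) * l.get i)) := by
        rw [kappa, Finset.mul_sum, ← Finset.sum_add_distrib]
    _ ≤ ∑ i : Fin l.length, (l.sum * l.get i - l.get i) := Finset.sum_le_sum fun i _ => hterm i
    _ = l.sum * (l.sum - 1) := by
        rw [Finset.sum_sub_distrib, ← Finset.mul_sum, hsum]
        ring

theorem kappa_lt_of_pos_of_two_le_length {l : List ℤ} (hl : ∀ x ∈ l, 0 < x)
    (hlen : 2 ≤ l.length) : kappa l < l.sum * (l.sum - 1) := by
  have hweight : 0 < ∑ i : Fin l.length, (i.val : ℤ) * l.get i := by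
    refine Finset.sum_pos' (fun i _ => ?_) ⟨⟨1, hlen⟩, Finset.mem_univ _, ?_⟩
    · exact mul_nonneg i.val.cast_nonneg (hl _ (l.get_mem i)).le
    · simpa using hl _ (l.get_mem ⟨1, hlen⟩)
  linarith [kappa_add_two_mul_sum_le fun x hx => (hl x hx).le]

/-- For every partition `λ` of `d ≥ 1`, `κ_λ ≤ d(d-1)`, with equality iff `λ = (d)`. -/
theorem kappa_le_of_partition (d : ℕ) (hd : 1 ≤ d) (l : List ℤ)
    (hl : IsPartition l) (hsum : l.sum = (d : ℤ)) :
    kappa l ≤ (d : ℤ) * (d - 1) ∧ (kappa l = (d : ℤ) * (d - 1) ↔ l = [(d : ℤ)]) := by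
  obtain ⟨-, hpos⟩ := hl
  rcases l with _ | ⟨a, _ | ⟨b, t⟩⟩
  · simp at hsum
    omega
  · simp [← hsum, kappa_singleton]
  · have hlt := kappa_lt_of_pos_of_two_le_length hpos (by simp)
    rw [hsum] at hlt
    exact ⟨hlt.le, iff_of_false hlt.ne (by simp)⟩
end

section
/- For every integer n ≥ 0, Σ_{j=0}^{n} (−1)^j · C(n,j) · (n − 2j)^n = 2^n · n!. -/
/-!
The sum is the `n`-th backward difference with step `2` of `x ↦ x ^ n` at `x = n`, and the
`n`-th difference with step `h` of `x ↦ x ^ n` is the constant `h ^ n * n!`: rescaling the step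
to `1` turns `x ^ n` into a polynomial with leading coefficient `h ^ n`.
-/

open Finset Function fwdDiff

variable {R : Type*} [CommRing R]

theorem fwdDiff_iter_eq_fwdDiff_iter_one_comp {G : Type*} [AddCommGroup G]
    (f : R → G) (h y : R) (n : ℕ) :
    (Δ_[h])^[n] f y = (Δ_[1])^[n] (fun s ↦ f (h * s + y)) 0 := by
  simp only [fwdDiff_iter_eq_sum_shift, zero_add, nsmul_eq_mul, mul_one, mul_comm h, add_comm y]

theorem fwdDiff_iter_one_affine_pow (a b : R) (n : ℕ) :
    (Δ_[1])^[n] (fun r ↦ (a * r + b) ^ n) = fun _ ↦ a ^ n * n.factorial := by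
  have expand : (fun r ↦ (a * r + b) ^ n) = a ^ n • (fun r ↦ r ^ n) +
      fun r ↦ ∑ k ∈ range n, (a ^ k * b ^ (n - k) * n.choose k) * r ^ k := by
    ext r
    simp only [add_pow, sum_range_succ, mul_pow, Nat.sub_self, pow_zero, Nat.choose_self,
      Nat.cast_one, mul_one, Pi.add_apply, Pi.smul_apply, smul_eq_mul]
    rw [add_comm]
    exact congrArg _ (sum_congr rfl fun k _ ↦ by ring)
  rw [expand, fwdDiff_iter_add, fwdDiff_iter_const_smul, fwdDiff_iter_eq_factorial,
    fwdDiff_iter_sum_mul_pow_eq_zero, add_zero]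
  rfl

theorem fwdDiff_iter_pow_eq_pow_mul_factorial (h y : R) (n : ℕ) :
    (Δ_[h])^[n] (fun r ↦ r ^ n) y = h ^ n * n.factorial := by
  rw [fwdDiff_iter_eq_fwdDiff_iter_one_comp, fwdDiff_iter_one_affine_pow]

theorem alternating_sum_choose_mul_eq_fwdDiff_iter (f : R → R) (h y : R) (n : ℕ) :
    ∑ j ∈ range (n + 1), (-1) ^ j * (n.choose j : R) * f (y - j * h) =
      (Δ_[h])^[n] f (y - n * h) := by
  rw [fwdDiff_iter_eq_sum_shift, ← sum_range_reflect]
  refine sum_congr rfl fun j hj ↦ ?_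
  have hj : j ≤ n := Nat.lt_succ_iff.mp (mem_range.mp hj)
  rw [Nat.add_sub_cancel, Nat.choose_symm hj, zsmul_eq_mul, nsmul_eq_mul, Nat.cast_sub hj]
  push_cast
  congr 2
  ring

/-- For every `n ≥ 0`, `Σ_{j=0}^{n} (-1)^j C(n,j) (n-2j)^n = 2^n · n!`. -/
theorem alternating_sum_pow_eq_two_pow_mul_factorial (n : ℕ) :
    ∑ j ∈ Finset.range (n + 1),
        ((-1 : ℤ) ^ j * (n.choose j : ℤ) * ((n : ℤ) - 2 * j) ^ n)
      = 2 ^ n * (n.factorial : ℤ) := by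
  simpa only [fwdDiff_iter_pow_eq_pow_mul_factorial, mul_comm _ (2 : ℤ)] using
    alternating_sum_choose_mul_eq_fwdDiff_iter (fun r : ℤ ↦ r ^ n) 2 n n
end

section
/- For every integer n ≥ 1, Σ_{k=1}^{n} (−1)^{n−k} · k^{2n} / ((n−k)! · (n+k)!) = 1/2. -/
/-!
The `2n`-th forward difference of `x ↦ x ^ (2n)` is the constant `(2n)!`. Expanding it at
`x = -n` gives `∑_{j=0}^{2n} (-1)^(2n-j) C(2n, j) (j - n)^(2n) = (2n)!`. The summand is the same at
`j = n - k` and `j = n + k` and vanishes at `j = n`, and `C(2n, n + k) / (2n)! = 1 / ((n-k)! (n+k)!)`,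
so the left side is `2 (2n)!` times the sum in question.
-/

open Finset Nat

theorem sum_alternating_choose_mul_add_pow_self {R : Type*} [CommRing R] (n : ℕ) (y : R) :
    ∑ j ∈ range (n + 1), (-1) ^ (n - j) * n.choose j * (y + j) ^ n = n ! := by
  have h := congr_fun (fwdDiff_iter_eq_factorial (R := R) (n := n)) y
  rw [fwdDiff_iter_eq_sum_shift] at h
  simpa [zsmul_eq_mul] using h

theorem sum_range_two_mul_add_one_eq_add_sum_Icc {M : Type*} [AddCommMonoid M] (g : ℕ → M)
    (m : ℕ) : ∑ j ∈ range (2 * m + 1), g j = g m + ∑ k ∈ Icc 1 m, (g (m - k) + g (m + k)) := by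
  rw [← sum_range_add_sum_Ico _ (by omega : m ≤ 2 * m + 1), sum_Ico_eq_sum_range,
    show 2 * m + 1 - m = m + 1 by omega, sum_range_succ', ← sum_range_reflect,
    show Icc 1 m = Ico 1 (m + 1) from rfl, sum_Ico_eq_sum_range, add_tsub_cancel_right,
    sum_add_distrib, add_zero]
  have hl : ∀ i ∈ range m, g (m - 1 - i) = g (m - (1 + i)) := fun i _ ↦ by rw [Nat.sub_sub]
  have hr : ∀ i ∈ range m, g (m + (i + 1)) = g (m + (1 + i)) := fun i _ ↦ by rw [Nat.add_comm i]
  rw [sum_congr rfl hl, sum_congr rfl hr]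
  abel

section CentralTerms

variable {K : Type*} [Field K] [CharZero K]

theorem neg_one_pow_mul_choose_two_mul_add_mul_pow {n k : ℕ} (hk : k ≤ n) :
    (-1 : K) ^ (2 * n - (n + k)) * (2 * n).choose (n + k) * (-(n : K) + (n + k : ℕ)) ^ (2 * n)
      = (2 * n)! * ((-1) ^ (n - k) * (k : K) ^ (2 * n) / ((n - k)! * (n + k)!)) := by
  rw [Nat.cast_choose K (by omega), show 2 * n - (n + k) = n - k by omega, Nat.cast_add,
    show -(n : K) + (n + k) = k by ring]
  field_simp

theorem neg_one_pow_mul_choose_two_mul_sub_mul_pow {n k : ℕ} (hk : k ≤ n) :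
    (-1 : K) ^ (2 * n - (n - k)) * (2 * n).choose (n - k) * (-(n : K) + (n - k : ℕ)) ^ (2 * n)
      = (2 * n)! * ((-1) ^ (n - k) * (k : K) ^ (2 * n) / ((n - k)! * (n + k)!)) := by
  have hsign : (-1 : K) ^ (2 * n - (n - k)) = (-1) ^ (2 * n - (n + k)) := by
    rw [show 2 * n - (n - k) = 2 * n - (n + k) + 2 * k by omega, pow_add, pow_mul, neg_one_sq,
      one_pow, mul_one]
  rw [hsign, Nat.choose_symm_of_eq_add (by omega : 2 * n = (n - k) + (n + k)), Nat.cast_sub hk,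
    show -(n : K) + (n - k) = -(-(n : K) + (n + k : ℕ)) by push_cast; ring,
    (even_two_mul n).neg_pow, neg_one_pow_mul_choose_two_mul_add_mul_pow hk]

end CentralTerms

/-- For every `n ≥ 1`, `Σ_{k=1}^{n} (-1)^{n-k} k^{2n} / ((n-k)!(n+k)!) = 1/2`. -/
theorem sum_eq_half (n : ℕ) (hn : 1 ≤ n) :
    ∑ k ∈ Finset.Icc 1 n,
        ((-1 : ℚ) ^ (n - k) * (k : ℚ) ^ (2 * n) /
          (((n - k).factorial : ℚ) * ((n + k).factorial : ℚ)))
      = 1 / 2 := by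
  have key := sum_alternating_choose_mul_add_pow_self (2 * n) (-(n : ℚ))
  rw [sum_range_two_mul_add_one_eq_add_sum_Icc _ n, neg_add_cancel, zero_pow (by omega),
    mul_zero, zero_add] at key
  rw [sum_congr rfl fun k hk ↦ by
    rw [neg_one_pow_mul_choose_two_mul_sub_mul_pow (mem_Icc.1 hk).2,
      neg_one_pow_mul_choose_two_mul_add_mul_pow (mem_Icc.1 hk).2, ← two_mul]] at key
  rw [← mul_sum, ← mul_sum] at key
  apply mul_left_cancel₀ (by positivity : ((2 * n)! : ℚ) ≠ 0)
  linarith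
end

section
/- For every integer d ≥ 1 and every real (or rational) x such that 1 + jx ≠ 0 for all integers j with 1−d ≤ j ≤ d−1, the following identity holds: Σ_{m,n ≥ 0, m+n = d−1} ( (−1)^n / (m! · n!) ) · Π_{j=−m}^{n} 1/(1 + j·x) = d · Cat(d−1) · x^{d−1} / Π_{i=1}^{d−1} (1 − i²x²), where Cat(d−1) = (2d−2)! / ((d−1)! · d!) is the (d−1)-st Catalan number. -/
/-!
With `m = d - 1`, multiply the sum by `D = ∏_{j=-m}^{m} (1 + j x) = ∏_{i=1}^{m} (1 - i² x²)`.
The `n`-th summand then keeps only the factors with `j < n - m` and `j > n`; up to the sign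
`(-1)^n`, these are the falling factorial powers with step `x` of `m x - 1` (length `n`) and of
`1 + m x` (length `m - n`). The Chu–Vandermonde identity for such powers sums `D · LHS` to
`(2m x)(2m x - x) ⋯ (m x + x) / m! = binom(2m, m) x^m = (m + 1) Cat(m) x^m`.
-/

open Finset Nat

section CommRing

variable {R : Type*} [CommRing R]

def stepDescFactorial (a h : R) (n : ℕ) : R := ∏ i ∈ range n, (a - i * h)

theorem stepDescFactorial_succ (a h : R) (n : ℕ) :
    stepDescFactorial a h (n + 1) = stepDescFactorial a h n * (a - n * h) :=
  prod_range_succ _ n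

theorem stepDescFactorial_add (a b h : R) (m : ℕ) :
    stepDescFactorial (a + b) h m = ∑ ij ∈ antidiagonal m,
      (m.choose ij.1 : R) * (stepDescFactorial a h ij.1 * stepDescFactorial b h ij.2) := by
  induction m with
  | zero => simp [stepDescFactorial]
  | succ m ih =>
    -- Pascal's rule, after splitting `a + b - m h = (a - i h) + (b - j h)` for `i + j = m`.
    rw [sum_antidiagonal_choose_succ_mul
        fun i j => stepDescFactorial a h i * stepDescFactorial b h j,
      stepDescFactorial_succ, ih, sum_mul, ← sum_add_distrib]
    refine sum_congr rfl fun ij hij => ?_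
    rw [HasAntidiagonal.mem_antidiagonal] at hij
    rw [← Nat.choose_symm_of_eq_add hij.symm, stepDescFactorial_succ, stepDescFactorial_succ,
      ← hij]
    push_cast
    ring

theorem stepDescFactorial_natCast_mul (h : R) {n k : ℕ} (hk : k ≤ n) :
    stepDescFactorial (n * h) h k = n.descFactorial k * h ^ k := by
  rw [stepDescFactorial, Nat.descFactorial_eq_prod_range, Nat.cast_prod,
    pow_eq_prod_const, ← prod_mul_distrib]
  refine prod_congr rfl fun i hi => ?_
  rw [Nat.cast_sub (by grind)]
  ring

theorem neg_one_pow_mul_stepDescFactorial (a h : R) (n : ℕ) :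
    (-1) ^ n * stepDescFactorial a h n = ∏ i ∈ range n, (i * h - a) := by
  rw [stepDescFactorial, pow_eq_prod_const, ← prod_mul_distrib]
  exact prod_congr rfl fun i _ => by ring

end CommRing

section IntInterval

variable {M : Type*} [CommMonoid M]

theorem prod_Ico_int_eq_prod_range (g : ℤ → M) (a : ℤ) (k : ℕ) :
    ∏ j ∈ Ico a (a + k), g j = ∏ i ∈ range k, g (a + i) := by
  rw [Int.Ico_eq_finset_map, prod_map]
  simp

theorem prod_Ioc_int_eq_prod_range (g : ℤ → M) (b : ℤ) (k : ℕ) :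
    ∏ j ∈ Ioc (b - k) b, g j = ∏ i ∈ range k, g (b - i) := by
  rw [Int.Ioc_eq_finset_map, prod_map, sub_sub_cancel, Int.toNat_natCast, ← prod_range_reflect]
  refine prod_congr rfl fun i hi => ?_
  simp only [Function.Embedding.trans_apply, Nat.castEmbedding_apply, addLeftEmbedding_apply]
  congr 1
  have := mem_range.1 hi
  omega

theorem prod_Icc_neg_add_eq_mul_mul (g : ℤ → M) (n k : ℕ) :
    ∏ j ∈ Icc (-((n + k : ℕ) : ℤ)) (n + k : ℕ), g j =
      (∏ i ∈ range n, g (-((n + k : ℕ) : ℤ) + i)) * (∏ j ∈ Icc (-(k : ℤ)) n, g j) *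
        ∏ i ∈ range k, g ((n + k : ℕ) - i) := by
  have hsplit : Icc (-((n + k : ℕ) : ℤ)) (n + k : ℕ) =
      Ico (-((n + k : ℕ) : ℤ)) (-((n + k : ℕ) : ℤ) + n) ∪ Icc (-(k : ℤ)) n ∪
        Ioc (((n + k : ℕ) : ℤ) - k) (n + k : ℕ) := by
    ext j; simp only [mem_union, mem_Icc, mem_Ico, mem_Ioc]; omega
  rw [hsplit, prod_union, prod_union, prod_Ico_int_eq_prod_range, prod_Ioc_int_eq_prod_range]
  all_goals
    refine disjoint_left.2 fun j h₁ h₂ => ?_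
    simp only [mem_union, mem_Icc, mem_Ico, mem_Ioc] at h₁ h₂
    omega

theorem prod_Icc_neg_self (g : ℤ → M) (m : ℕ) :
    ∏ j ∈ Icc (-m : ℤ) m, g j = g 0 * ∏ i ∈ Icc 1 m, (g i * g (-i)) := by
  induction m with
  | zero => simp
  | succ m ih =>
    have hIcc : Icc (-(m + 1 : ℕ) : ℤ) (m + 1 : ℕ) =
        insert ((m + 1 : ℕ) : ℤ) (insert (-(m + 1 : ℕ) : ℤ) (Icc (-m : ℤ) m)) := by
      ext j; simp only [mem_Icc, mem_insert]; omega
    rw [hIcc, prod_insert (by simp only [mem_insert, mem_Icc]; omega),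
      prod_insert (by simp only [mem_Icc]; omega), ih, prod_Icc_succ_top (by omega)]
    push_cast
    ac_rfl

end IntInterval

theorem summand_mul_prod_Icc {K : Type*} [Field K] [CharZero K] (x : K) {n k : ℕ}
    (hx : ∀ j ∈ Icc (-(k : ℤ)) n, 1 + j * x ≠ 0) :
    (-1) ^ n / (k ! * n ! : K) * (∏ j ∈ Icc (-(k : ℤ)) n, (1 + j * x)⁻¹) *
        ∏ j ∈ Icc (-((n + k : ℕ) : ℤ)) (n + k : ℕ), (1 + j * x) =
      (n + k).choose n / (n + k)! *
        (stepDescFactorial ((n + k : ℕ) * x - 1) x n *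
          stepDescFactorial (1 + (n + k : ℕ) * x) x k) := by
  have hmid : ∏ j ∈ Icc (-(k : ℤ)) n, (1 + j * x) ≠ 0 := prod_ne_zero_iff.2 hx
  have hlow : ∏ i ∈ range n, (1 + ((-((n + k : ℕ) : ℤ) + i : ℤ) : K) * x) =
      (-1) ^ n * stepDescFactorial ((n + k : ℕ) * x - 1) x n := by
    rw [neg_one_pow_mul_stepDescFactorial]
    exact prod_congr rfl fun i _ => by push_cast; ring
  have hhigh : ∏ i ∈ range k, (1 + ((((n + k : ℕ) : ℤ) - i : ℤ) : K) * x) =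
      stepDescFactorial (1 + (n + k : ℕ) * x) x k :=
    prod_congr rfl fun i _ => by push_cast; ring
  have hcoef : ((n + k).choose n : K) / (n + k)! = 1 / (k ! * n !) := by
    have : ((n + k)! : K) ≠ 0 := Nat.cast_ne_zero.2 (factorial_ne_zero _)
    rw [cast_add_choose]
    field_simp
  rw [prod_Icc_neg_add_eq_mul_mul, hlow, hhigh, prod_inv_distrib, hcoef]
  generalize ∏ j ∈ Icc (-(k : ℤ)) n, (1 + (j : K) * x) = P at hmid ⊢
  field_simp
  rw [← pow_mul, pow_mul', neg_one_sq, one_pow]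
  ring

/-- The one-point generating function of monotone Hurwitz numbers:
`Σ_{m+n=d-1} ((-1)^n/(m!n!)) Π_{j=-m}^{n} 1/(1+jx)
  = d · Cat(d-1) · x^{d-1} / Π_{i=1}^{d-1} (1 - i²x²)`. -/
theorem monotone_one_point_sum (d : ℕ) (hd : 1 ≤ d) (x : ℚ)
    (hx : ∀ j : ℤ, 1 - (d : ℤ) ≤ j → j ≤ (d : ℤ) - 1 → 1 + (j : ℚ) * x ≠ 0) :
    ∑ n ∈ Finset.range d,
        ((-1 : ℚ) ^ n / (((d - 1 - n).factorial : ℚ) * (n.factorial : ℚ)) *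
          ∏ j ∈ Finset.Icc (-((d : ℤ) - 1 - n)) (n : ℤ), (1 + (j : ℚ) * x)⁻¹)
      = (d : ℚ) * (catalan (d - 1) : ℚ) * x ^ (d - 1) /
          ∏ i ∈ Finset.Icc 1 (d - 1), (1 - (i : ℚ) ^ 2 * x ^ 2) := by
  obtain ⟨m, rfl⟩ : ∃ m, d = m + 1 := ⟨d - 1, by omega⟩
  have hD : ∏ j ∈ Icc (-(m : ℤ)) m, (1 + (j : ℚ) * x) ≠ 0 :=
    prod_ne_zero_iff.2 fun j hj => hx j (by grind) (by grind)
  have hden : ∏ i ∈ Icc 1 m, (1 - (i : ℚ) ^ 2 * x ^ 2) =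
      ∏ j ∈ Icc (-(m : ℤ)) m, (1 + (j : ℚ) * x) := by
    rw [prod_Icc_neg_self]
    simp only [Int.cast_zero, zero_mul, add_zero, one_mul, Int.cast_neg, Int.cast_natCast]
    exact prod_congr rfl fun i _ => by ring
  rw [add_tsub_cancel_right, hden, eq_div_iff hD, sum_mul]
  calc _ = ∑ ij ∈ antidiagonal m, (m.choose ij.1 : ℚ) / m ! *
        (stepDescFactorial (m * x - 1) x ij.1 * stepDescFactorial (1 + m * x) x ij.2) := by
        rw [Nat.sum_antidiagonal_eq_sum_range_succ_mk]
        refine sum_congr rfl fun n hn => ?_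
        obtain ⟨k, rfl⟩ : ∃ k, m = n + k := ⟨m - n, by grind⟩
        have hk : -(((n + k + 1 : ℕ) : ℤ) - 1 - n) = -(k : ℤ) := by push_cast; ring
        rw [add_tsub_cancel_left, hk]
        exact summand_mul_prod_Icc x fun j hj => hx j (by grind) (by grind)
    _ = stepDescFactorial ((2 * m : ℕ) * x) x m / m ! := by
        rw [show ((2 * m : ℕ) : ℚ) * x = (m * x - 1) + (1 + m * x) by push_cast; ring,
          stepDescFactorial_add, sum_div]
        exact sum_congr rfl fun _ _ => div_mul_eq_mul_div _ _ _
    _ = _ := by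
        rw [stepDescFactorial_natCast_mul _ (by omega), descFactorial_eq_factorial_mul_choose,
          ← centralBinom_eq_two_mul_choose, ← succ_mul_catalan_eq_centralBinom]
        push_cast
        field_simp
end

section
/- For every integer d ≥ 2 and every real (or rational) x with 1 − i²x² ≠ 0 for 1 ≤ i ≤ d−1: Cat(d−1) · x^{d−1} / Π_{i=1}^{d−1}(1 − i²x²) = Σ_{k=1}^{d−1} (−1)^{d−1−k} · Cat(d−1) · k^{d−1} / ((d−1−k)! · (d−1+k)!) · ( 1/(1 − kx) + (−1)^{d−1}/(1 + kx) ). -/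
/-!
Since `∏_{i=1}^{n} (1 - i² x²) = ∏_{0 < |r| ≤ n} (1 - r x)` and `n < 2n`, the left side is a
proper fraction with `2n` distinct simple poles, and its partial fraction expansion
`∑ A_r / (1 - r x)` is Lagrange interpolation of `x ^ n` at the nodes `1 / r`. The coefficient is
`A_r = r ^ n / ∏_{s ∈ [-n, n] \ {r}} (r - s) = (-1) ^ (n - r) r ^ n / ((n + r)! (n - r)!)`, and the
coefficients at `r = ±k` differ by the sign `(-1) ^ n`.
-/

open Finset Polynomial
open scoped Nat

theorem eval_div_prod_one_sub_mul_eq_sum {K ι : Type*} [Field K] [DecidableEq ι]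
    {s : Finset ι} {a : ι → K} (ha : Set.InjOn a s) (ha0 : ∀ i ∈ s, a i ≠ 0)
    {f : K[X]} (hf : f.degree < #s) {x : K} (hx : ∀ i ∈ s, 1 - a i * x ≠ 0) :
    f.eval x / ∏ i ∈ s, (1 - a i * x) =
      ∑ i ∈ s, f.eval (a i)⁻¹ / (∏ j ∈ s.erase i, (1 - a j / a i)) / (1 - a i * x) := by
  have hv : Set.InjOn (fun i => (a i)⁻¹) s := fun i hi j hj h => ha hi hj (inv_injective h)
  have hbasis : ∀ i ∈ s, (Lagrange.basis s (fun i => (a i)⁻¹) i).eval x =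
      (∏ j ∈ s.erase i, (1 - a j * x)) / ∏ j ∈ s.erase i, (1 - a j / a i) := by
    intro i hi
    rw [Lagrange.basis, eval_prod, ← prod_div_distrib]
    refine prod_congr rfl fun j hj => ?_
    obtain ⟨hji, hj⟩ := mem_erase.mp hj
    have hne : a i ≠ a j := fun h => hji (ha hj hi h.symm)
    have hai := ha0 i hi
    have haj := ha0 j hj
    have hsub : a i - a j ≠ 0 := sub_ne_zero.mpr hne
    simp only [Lagrange.basisDivisor, eval_mul, eval_C, eval_sub, eval_X]
    field_simp
    ring
  rw [congrArg (eval x) (Lagrange.eq_interpolate hv hf), Lagrange.interpolate_apply,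
    eval_finsetSum, sum_div]
  refine sum_congr rfl fun i hi => ?_
  rw [eval_mul, eval_C, hbasis i hi, ← mul_prod_erase s _ hi]
  have hR : ∏ j ∈ s.erase i, (1 - a j * x) ≠ 0 :=
    prod_ne_zero_iff.mpr fun j hj => hx j (mem_of_mem_erase hj)
  rw [mul_comm (1 - a i * x), ← div_div, mul_div_assoc, div_right_comm, div_self hR, one_div,
    ← div_eq_mul_inv]

@[to_additive]
theorem prod_Icc_neg_erase_zero {M : Type*} [CommMonoid M] (f : ℤ → M) (n : ℕ) :
    ∏ r ∈ (Icc (-n : ℤ) n).erase 0, f r = ∏ k ∈ Icc 1 n, (f k * f (-k)) := by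
  induction n with
  | zero => rfl
  | succ n ih =>
    have hsplit : (Icc (-(n + 1 : ℕ) : ℤ) (n + 1 : ℕ)).erase 0 =
        insert ((n : ℤ) + 1) (insert (-((n : ℤ) + 1)) ((Icc (-n : ℤ) n).erase 0)) := by
      ext r; simp only [mem_erase, mem_Icc, mem_insert]; omega
    rw [hsplit, prod_insert (by simp only [mem_erase, mem_Icc, mem_insert]; omega),
      prod_insert (by simp only [mem_erase, mem_Icc]; omega), ih, prod_Icc_succ_top (by omega)]
    push_cast
    ac_rfl

theorem prod_Ico_sub_self (r : ℤ) (m : ℕ) : ∏ s ∈ Ico (r - m) r, (r - s) = m ! := by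
  induction m with
  | zero => simp
  | succ m ih =>
    have hins : Ico (r - (m + 1 : ℕ)) r = insert (r - (m + 1 : ℕ)) (Ico (r - m) r) := by
      ext s; simp only [mem_Ico, mem_insert]; omega
    rw [hins, prod_insert (by simp only [mem_Ico]; omega), ih, Nat.factorial_succ]
    push_cast
    ring

theorem prod_Ioc_self_sub (r : ℤ) (n : ℕ) : ∏ s ∈ Ioc r (r + n), (r - s) = (-1) ^ n * n ! := by
  induction n with
  | zero => simp
  | succ n ih =>
    have hins : Ioc r (r + (n + 1 : ℕ)) = insert (r + (n + 1 : ℕ)) (Ioc r (r + n)) := by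
      ext s; simp only [mem_Ioc, mem_insert]; omega
    rw [hins, prod_insert (by simp only [mem_Ioc]; omega), ih, Nat.factorial_succ]
    push_cast
    ring

theorem prod_erase_Icc_self_sub (r : ℤ) (m n : ℕ) :
    ∏ s ∈ (Icc (r - m) (r + n)).erase r, (r - s) = (-1) ^ n * m ! * n ! := by
  have hsplit : (Icc (r - m) (r + n)).erase r = Ico (r - m) r ∪ Ioc r (r + n) := by
    ext s; simp only [mem_erase, mem_Icc, mem_union, mem_Ico, mem_Ioc]; omega
  rw [hsplit, prod_union (disjoint_left.mpr fun s h₁ h₂ => by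
    simp only [mem_Ico, mem_Ioc] at h₁ h₂; omega), prod_Ico_sub_self, prod_Ioc_self_sub]
  ring

variable {K : Type*} [Field K] [CharZero K]

theorem inv_pow_div_prod_erase_one_sub_div (n : ℕ) {r : ℤ} (hr : r ∈ (Icc (-n : ℤ) n).erase 0) :
    ((r : K)⁻¹) ^ n / ∏ s ∈ ((Icc (-n : ℤ) n).erase 0).erase r, (1 - (s : K) / r) =
      (r : K) ^ n / ∏ s ∈ (Icc (-n : ℤ) n).erase r, ((r : K) - s) := by
  obtain ⟨hr0, hr⟩ := mem_erase.mp hr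
  have hrK : (r : K) ≠ 0 := Int.cast_ne_zero.mpr hr0
  have hcard : #(((Icc (-n : ℤ) n).erase 0).erase r) + 1 = 2 * n := by
    rw [card_erase_of_mem (mem_erase.mpr ⟨hr0, hr⟩), card_erase_of_mem (by simp), Int.card_Icc]
    have := mem_Icc.mp hr
    omega
  have hfactor : ∏ s ∈ (Icc (-n : ℤ) n).erase r, ((r : K) - s) =
      (r : K) ^ (2 * n) * ∏ s ∈ ((Icc (-n : ℤ) n).erase 0).erase r, (1 - (s : K) / r) := by
    rw [← mul_prod_erase _ _ (mem_erase.mpr ⟨Ne.symm hr0, by simp⟩), erase_right_comm,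
      ← hcard, pow_succ', ← prod_const, mul_assoc, ← prod_mul_distrib]
    congr 1
    · simp
    · refine prod_congr rfl fun s _ => ?_
      field_simp
  rw [hfactor, two_mul, pow_add, mul_assoc, div_mul_cancel_left₀ (pow_ne_zero n hrK), mul_inv,
    inv_pow, div_eq_mul_inv]

theorem inv_pow_div_prod_erase_natCast (n k : ℕ) (hk : k ∈ Icc 1 n) :
    (((k : ℤ) : K)⁻¹) ^ n / ∏ s ∈ ((Icc (-n : ℤ) n).erase 0).erase (k : ℤ), (1 - (s : K) / (k : ℤ))
      = (-1) ^ (n - k) * (k : K) ^ n / ((n - k)! * (n + k)!) := by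
  obtain ⟨hk1, hkn⟩ := mem_Icc.mp hk
  have hIcc : Icc (-n : ℤ) n = Icc ((k : ℤ) - (n + k : ℕ)) ((k : ℤ) + (n - k : ℕ)) := by
    congr 1 <;> push_cast [Nat.cast_sub hkn] <;> ring
  have hprod : ∏ s ∈ (Icc (-n : ℤ) n).erase (k : ℤ), (((k : ℤ) : K) - s) =
      (-1) ^ (n - k) * (n + k)! * (n - k)! := by
    rw [hIcc]; exact_mod_cast prod_erase_Icc_self_sub k (n + k) (n - k)
  rw [inv_pow_div_prod_erase_one_sub_div n (by simp; omega), hprod]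
  push_cast
  rcases neg_one_pow_eq_or K (n - k) with h | h <;> rw [h] <;> ring

theorem inv_pow_div_prod_erase_neg_natCast (n k : ℕ) (hk : k ∈ Icc 1 n) :
    (((-k : ℤ) : K)⁻¹) ^ n / ∏ s ∈ ((Icc (-n : ℤ) n).erase 0).erase (-k : ℤ), (1 - (s : K) / (-k : ℤ))
      = (-1) ^ n * ((-1) ^ (n - k) * (k : K) ^ n / ((n - k)! * (n + k)!)) := by
  obtain ⟨hk1, hkn⟩ := mem_Icc.mp hk
  have hIcc : Icc (-n : ℤ) n = Icc ((-k : ℤ) - (n - k : ℕ)) ((-k : ℤ) + (n + k : ℕ)) := by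
    congr 1 <;> push_cast [Nat.cast_sub hkn] <;> ring
  have hprod : ∏ s ∈ (Icc (-n : ℤ) n).erase (-k : ℤ), (((-k : ℤ) : K) - s) =
      (-1) ^ (n + k) * (n - k)! * (n + k)! := by
    rw [hIcc]; exact_mod_cast prod_erase_Icc_self_sub (-k) (n - k) (n + k)
  rw [inv_pow_div_prod_erase_one_sub_div n (by simp; omega), hprod,
    show n + k = n - k + 2 * k by omega, pow_add, pow_mul, neg_one_sq, one_pow, mul_one]
  push_cast
  rcases neg_one_pow_eq_or K (n - k) with h | h <;> rw [h] <;> ring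

theorem pow_div_prod_one_sub_sq_mul_sq (n : ℕ) (hn : 1 ≤ n) (x : K)
    (hx : ∀ i ∈ Icc 1 n, 1 - (i : K) ^ 2 * x ^ 2 ≠ 0) :
    x ^ n / ∏ i ∈ Icc 1 n, (1 - (i : K) ^ 2 * x ^ 2) =
      ∑ k ∈ Icc 1 n, (-1) ^ (n - k) * (k : K) ^ n / ((n - k)! * (n + k)!) *
        (1 / (1 - k * x) + (-1) ^ n / (1 + k * x)) := by
  have hprod : ∏ i ∈ Icc 1 n, (1 - (i : K) ^ 2 * x ^ 2) =
      ∏ r ∈ (Icc (-n : ℤ) n).erase 0, (1 - (r : K) * x) := by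
    rw [prod_Icc_neg_erase_zero]
    refine prod_congr rfl fun i _ => ?_
    push_cast
    ring
  have hx' : ∀ r ∈ (Icc (-n : ℤ) n).erase 0, 1 - (r : K) * x ≠ 0 :=
    prod_ne_zero_iff.mp (hprod ▸ prod_ne_zero_iff.mpr hx)
  have hdeg : (X ^ n : K[X]).degree < #((Icc (-n : ℤ) n).erase 0) := by
    rw [degree_X_pow, card_erase_of_mem (by simp), Int.card_Icc]
    exact_mod_cast (by omega)
  have hpf := eval_div_prod_one_sub_mul_eq_sum (a := Int.cast) Int.cast_injective.injOn
    (fun r hr => Int.cast_ne_zero.mpr (ne_of_mem_erase hr)) hdeg hx'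
  simp only [eval_pow, eval_X] at hpf
  rw [hprod, hpf, sum_Icc_neg_erase_zero]
  refine sum_congr rfl fun k hk => ?_
  rw [inv_pow_div_prod_erase_natCast n k hk, inv_pow_div_prod_erase_neg_natCast n k hk]
  push_cast
  ring

/-- Partial fraction decomposition of the monotone single Hurwitz generating function. -/
theorem monotone_partial_fractions (d : ℕ) (hd : 2 ≤ d) (x : ℚ)
    (hx : ∀ i ∈ Finset.Icc 1 (d - 1), 1 - (i : ℚ) ^ 2 * x ^ 2 ≠ 0) :
    (catalan (d - 1) : ℚ) * x ^ (d - 1) /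
        ∏ i ∈ Finset.Icc 1 (d - 1), (1 - (i : ℚ) ^ 2 * x ^ 2)
      = ∑ k ∈ Finset.Icc 1 (d - 1),
          (-1 : ℚ) ^ (d - 1 - k) * (catalan (d - 1) : ℚ) * (k : ℚ) ^ (d - 1) /
            (((d - 1 - k).factorial : ℚ) * ((d - 1 + k).factorial : ℚ)) *
            (1 / (1 - (k : ℚ) * x) + (-1 : ℚ) ^ (d - 1) / (1 + (k : ℚ) * x)) := by
  rw [mul_div_assoc, pow_div_prod_one_sub_sq_mul_sq (d - 1) (by omega) x hx, mul_sum]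
  refine sum_congr rfl fun k _ => ?_
  ring
end
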